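/- Let M be a MAG over V = {X, Y} ∪ O satisfying the pretreatment setup. If M contains a visible directed edge X → Y and some subset of O satisfies the generalized adjustment criterion relative to (X, Y), then there exist a vertex S ∈ MB(X) \ {Y} and a set Z ⊆ MB(Y) \ {X} such that S and Y are m-connected given Z and S and Y are m-separated by Z ∪ {X}. (Necessity of rule R1, Scenario 1 in the proof of Theorem 4.) -/

import Mathlib

namespace CausalGraph

/-- A directed mixed graph: directed edges `dir a b` (a → b) and bidirected
edges `bidir a b` (a ↔ b), with at most one edge between any two vertices
and no self-loops. -/
structure MixedGraph (V : Type*) where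
  dir : V → V → Prop
  bidir : V → V → Prop
  bidir_symm : ∀ a b, bidir a b → bidir b a
  dir_irrefl : ∀ a, ¬ dir a a
  bidir_irrefl : ∀ a, ¬ bidir a a
  dir_not_dir : ∀ a b, dir a b → ¬ dir b a
  dir_not_bidir : ∀ a b, dir a b → ¬ bidir a b

variable {V : Type*}

/-- Two vertices are adjacent if there is an edge (of any kind) between them. -/
def MixedGraph.adj (G : MixedGraph V) (a b : V) : Prop :=
  G.dir a b ∨ G.dir b a ∨ G.bidir a b

/-- There is an edge between `a` and `b` with an arrowhead at `b`. -/
def ArrowInto (G : MixedGraph V) (a b : V) : Prop :=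
  G.dir a b ∨ G.bidir a b

/-- `p` is a path between `a` and `b`: a list of distinct vertices, each
consecutive pair adjacent, starting at `a` and ending at `b`. -/
def IsPathBetween (G : MixedGraph V) (p : List V) (a b : V) : Prop :=
  List.Chain' G.adj p ∧ p.Nodup ∧ p.head? = some a ∧ p.getLast? = some b ∧ 2 ≤ p.length

/-- `p` is a directed path from `a` to `b`: all edges are directed edges
pointing toward `b`. -/
def IsDirectedPath (G : MixedGraph V) (p : List V) (a b : V) : Prop :=
  List.Chain' G.dir p ∧ p.Nodup ∧ p.head? = some a ∧ p.getLast? = some b ∧ 2 ≤ p.length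

/-- `a` is an ancestor of `b` (and `b` a descendant of `a`): `a = b` or there
is a directed path from `a` to `b`. -/
def Ancestor (G : MixedGraph V) (a b : V) : Prop :=
  a = b ∨ ∃ p, IsDirectedPath G p a b

/-- `w` is an intermediate (non-endpoint) vertex of the path `p`. -/
def IsIntermediateOn (p : List V) (w : V) : Prop :=
  ∃ (u v : V) (l₁ l₂ : List V), p = l₁ ++ u :: w :: v :: l₂

/-- `w` is a collider on the path `p`: both edges of the path at `w` have an
arrowhead at `w`. -/
def IsColliderOn (G : MixedGraph V) (p : List V) (w : V) : Prop :=
  ∃ (u v : V) (l₁ l₂ : List V), p = l₁ ++ u :: w :: v :: l₂ ∧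
    ArrowInto G u w ∧ ArrowInto G v w

/-- `w` is a non-collider intermediate vertex on the path `p`. -/
def IsNonColliderOn (G : MixedGraph V) (p : List V) (w : V) : Prop :=
  IsIntermediateOn p w ∧ ¬ IsColliderOn G p w

/-- The path `p` between `a` and `b` (with `a, b ∉ Z`) is m-connecting given
`Z`: every non-collider on it is not in `Z`, and every collider on it has a
descendant in `Z`. -/
def MConnPath (G : MixedGraph V) (Z : Set V) (p : List V) (a b : V) : Prop :=
  IsPathBetween G p a b ∧ a ∉ Z ∧ b ∉ Z ∧
    (∀ w, IsNonColliderOn G p w → w ∉ Z) ∧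
    (∀ w, IsColliderOn G p w → ∃ d ∈ Z, Ancestor G w d)

/-- `a` and `b` are m-separated by `Z`: no path between them is m-connecting
given `Z`. -/
def MSep (G : MixedGraph V) (Z : Set V) (a b : V) : Prop :=
  ∀ p, ¬ MConnPath G Z p a b

/-- `a` and `b` are m-connected given `Z`. -/
def MConn (G : MixedGraph V) (Z : Set V) (a b : V) : Prop :=
  ∃ p, MConnPath G Z p a b

/-- Set version of m-separation: every vertex of `A` is m-separated from every
vertex of `B` by `Z`. -/
def MSepSets (G : MixedGraph V) (Z A B : Set V) : Prop :=
  ∀ a ∈ A, ∀ b ∈ B, MSep G Z a b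

/-- `G` is a maximal ancestral graph (MAG): it is ancestral (no directed or
almost directed cycles), and every pair of distinct non-adjacent vertices is
m-separated by some set of vertices. -/
def IsMAG (G : MixedGraph V) : Prop :=
  (∀ a b, G.dir a b → ¬ Ancestor G b a) ∧
  (∀ a b, G.bidir a b → ¬ Ancestor G a b) ∧
  (∀ a b, a ≠ b → ¬ G.adj a b → ∃ Z : Set V, a ∉ Z ∧ b ∉ Z ∧ MSep G Z a b)

/-- `p` is a collider path between `a` and `b`: every intermediate vertex is a
collider on it. -/
def IsColliderPathBetween (G : MixedGraph V) (p : List V) (a b : V) : Prop :=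
  IsPathBetween G p a b ∧ ∀ w, IsIntermediateOn p w → IsColliderOn G p w

/-- The Markov blanket of `y`: all vertices adjacent to `y`, together with all
vertices non-adjacent to `y` joined to `y` by a collider path. -/
def MarkovBlanket (G : MixedGraph V) (y : V) : Set V :=
  {v | v ≠ y ∧ (G.adj v y ∨ (¬ G.adj v y ∧ ∃ p, IsColliderPathBetween G p v y))}

/-- The directed edge `x → y` is visible: there is a vertex `s` not adjacent
to `y` such that either there is an edge between `s` and `x` with an arrowhead
at `x`, or there is a collider path from `s` to `x` with an arrowhead at `x`
all of whose intermediate vertices are parents of `y`. -/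
def VisibleEdge (G : MixedGraph V) (x y : V) : Prop :=
  G.dir x y ∧ ∃ s, s ≠ y ∧ ¬ G.adj s y ∧
    (ArrowInto G s x ∨
      ∃ p, IsColliderPathBetween G p s x ∧
        (∃ (l : List V) (u : V), p = l ++ [u, x] ∧ ArrowInto G u x) ∧
        (∀ w, IsIntermediateOn p w → G.dir w y))

/-- A non-causal path from `x` to `y`: a path between `x` and `y` that is not
a directed path from `x` to `y`. -/
def NonCausalPath (G : MixedGraph V) (p : List V) (a b : V) : Prop :=
  IsPathBetween G p a b ∧ ¬ IsDirectedPath G p a b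

/-- `Z` blocks every non-causal path from `x` to `y`. -/
def BlocksAllNonCausal (G : MixedGraph V) (x y : V) (Z : Set V) : Prop :=
  ∀ p, NonCausalPath G p x y → ¬ MConnPath G Z p x y

/-- `Z` satisfies the generalized adjustment criterion relative to `(x, y)`:
every directed path from `x` to `y` starts with a visible directed edge out of
`x`, `Z` contains no descendant of any vertex lying on a directed path from
`x` to `y`, and `Z` blocks every non-causal path from `x` to `y`. -/
def ValidAdjustment (G : MixedGraph V) (x y : V) (Z : Set V) : Prop :=
  (∀ (p : List V) (w : V) (l : List V),
      IsDirectedPath G p x y → p = x :: w :: l → VisibleEdge G x w) ∧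
  (∀ v ∈ Z, ¬ ∃ (w : V) (p : List V), IsDirectedPath G p x y ∧ w ∈ p ∧ Ancestor G w v) ∧
  BlocksAllNonCausal G x y Z

/-- Pretreatment setup: `G` is a MAG over `V = {x, y} ∪ O`, `x ≠ y`, `y` is
not an ancestor of `x`, and neither `x` nor `y` is an ancestor of any vertex
of `O`. -/
structure Pretreatment (G : MixedGraph V) (x y : V) (O : Set V) : Prop where
  mag : IsMAG G
  ne : x ≠ y
  x_not_mem : x ∉ O
  y_not_mem : y ∉ O
  cover : (Set.univ : Set V) = {x, y} ∪ O
  y_not_anc_x : ¬ Ancestor G y x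
  x_not_anc_O : ∀ v ∈ O, ¬ Ancestor G x v
  y_not_anc_O : ∀ v ∈ O, ¬ Ancestor G y v

/- ===== auxiliary lemmas ===== -/

lemma adj_symm {G : MixedGraph V} {a b : V} (h : G.adj a b) : G.adj b a := by
  rcases h with h | h | h
  · exact Or.inr (Or.inl h)
  · exact Or.inl h
  · exact Or.inr (Or.inr (G.bidir_symm _ _ h))


lemma adj_irrefl (G : MixedGraph V) (a : V) : ¬ G.adj a a := by
  rintro (h | h | h)
  · exact G.dir_irrefl a h
  · exact G.dir_irrefl a h
  · exact G.bidir_irrefl a h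


lemma dir_of_adj_not_arrow {G : MixedGraph V} {a b : V}
    (h : G.adj a b) (h2 : ¬ ArrowInto G a b) : G.dir b a := by
  rcases h with h | h | h
  · exact absurd (Or.inl h) h2
  · exact h
  · exact absurd (Or.inr h) h2


lemma not_arrowInto_of_dir {G : MixedGraph V} {a b : V} (h : G.dir a b) :
    ¬ ArrowInto G b a := by
  rintro (h2 | h2)
  · exact G.dir_not_dir _ _ h h2
  · exact G.dir_not_bidir _ _ h (G.bidir_symm _ _ h2)


lemma adj_of_arrow {G : MixedGraph V} {a b : V} (h : ArrowInto G a b) : G.adj a b := by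
  rcases h with h | h
  · exact Or.inl h
  · exact Or.inr (Or.inr h)


lemma ne_of_arrow {G : MixedGraph V} {a b : V} (h : ArrowInto G a b) : a ≠ b := by
  rintro rfl
  rcases h with h | h
  · exact G.dir_irrefl _ h
  · exact G.bidir_irrefl _ h

/- ===== list index helpers ===== -/


lemma head?_eq_getElem {p : List V} (h : 0 < p.length) : p.head? = some p[0] := by
  cases p with
  | nil => simp at h
  | cons a l => rfl


lemma getLast?_eq_getElem {p : List V} (h : 0 < p.length) :
    p.getLast? = some p[p.length - 1] := by
  rw [List.getLast?_eq_getElem?, List.getElem?_eq_getElem (by omega)]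


lemma chain'_getElem {R : V → V → Prop} {p : List V} (h : List.Chain' R p)
    (i : ℕ) (hi : i + 1 < p.length) : R p[i] p[i+1] := by
  have := List.isChain_iff_getElem.mp h i (by omega)
  simpa [List.get_eq_getElem] using this


lemma chain'_of_getElem {R : V → V → Prop} {p : List V}
    (h : ∀ (i : ℕ) (_ : i + 1 < p.length), R p[i] p[i+1]) : List.Chain' R p := by
  apply List.isChain_iff_getElem.mpr
  intro i hi
  simpa [List.get_eq_getElem] using h i (by omega)


lemma nodup_getElem_inj {p : List V} (h : p.Nodup) {i j : ℕ}
    (hi : i < p.length) (hj : j < p.length) (he : p[i] = p[j]) : i = j := by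
  have := List.nodup_iff_injective_get.mp h (a₁ := ⟨i, hi⟩) (a₂ := ⟨j, hj⟩)
    (by simpa [List.get_eq_getElem] using he)
  exact congrArg Fin.val this

/- ===== Ancestor theory ===== -/


lemma anc_refl (G : MixedGraph V) (a : V) : Ancestor G a a := Or.inl rfl


lemma rtg_of_chain' {G : MixedGraph V} {p : List V} (h : List.Chain' G.dir p)
    {i j : ℕ} (hij : i ≤ j) (hj : j < p.length) :
    Relation.ReflTransGen G.dir p[i] p[j] := by
  induction j with
  | zero =>
      obtain rfl : i = 0 := Nat.le_zero.mp hij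
      exact Relation.ReflTransGen.refl
  | succ k ih =>
      rcases Nat.eq_or_lt_of_le hij with rfl | hlt
      · exact Relation.ReflTransGen.refl
      · have hk : i ≤ k := by omega
        exact (ih hk (by omega)).tail (chain'_getElem h k (by omega))


lemma rtg_of_anc {G : MixedGraph V} {a b : V} (h : Ancestor G a b) :
    Relation.ReflTransGen G.dir a b := by
  rcases h with rfl | ⟨p, hch, _, hh, hl, hlen⟩
  · exact Relation.ReflTransGen.refl
  · have h0 : 0 < p.length := by omega
    have ha : p[0] = a := by
      have := head?_eq_getElem (p := p) h0; rw [hh] at this; exact (Option.some.injEq _ _ ▸ this).symm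
    have hb : p[p.length - 1] = b := by
      have := getLast?_eq_getElem (p := p) h0; rw [hl] at this
      exact (Option.some.injEq _ _ ▸ this).symm
    subst ha; rw [← hb]
    exact rtg_of_chain' hch (by omega) (by omega)


lemma anc_of_rtg {G : MixedGraph V} {a b : V} (h : Relation.ReflTransGen G.dir a b) :
    Ancestor G a b := by
  induction h with
  | refl => exact anc_refl G a
  | @tail c d hac hdir ih =>
    rcases ih with rfl | ⟨p, hch, hnd, hh, hl, hlen⟩
    · refine Or.inr ⟨[a, d], by show List.IsChain _ _; simpa using hdir, ?_, rfl, by simp, by simp⟩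
      have : a ≠ d := by rintro rfl; exact G.dir_irrefl _ hdir
      simp [this]
    · by_cases hmem : d ∈ p
      · obtain ⟨l₁, l₂, rfl⟩ := List.append_of_mem hmem
        cases l₁ with
        | nil =>
            have : d = a := by simpa using hh
            subst this; exact anc_refl G d
        | cons e l =>
            refine Or.inr ⟨(e :: l) ++ [d], ?_, ?_, ?_, List.getLast?_concat, by simp⟩
            · exact hch.prefix ⟨l₂, by simp⟩
            · refine hnd.sublist ?_
              have : (e :: l) ++ [d] ++ l₂ = e :: l ++ d :: l₂ := by simp
              exact this ▸ List.sublist_append_left _ l₂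
            · simpa using hh
      · refine Or.inr ⟨p ++ [d], ?_, ?_, ?_, List.getLast?_concat, ?_⟩
        · show List.IsChain _ _; rw [List.isChain_append]
          refine ⟨hch, by simp, ?_⟩
          intro u hu v hv
          simp at hv; subst hv
          rw [hl] at hu; simp at hu; subst hu; exact hdir
        · rw [List.nodup_append]
          refine ⟨hnd, by simp, ?_⟩
          intro a' ha' b hb'
          simp at hb'; subst hb'; exact fun hab => hmem (hab ▸ ha')
        · cases p with
          | nil => simp at hlen
          | cons a' l' => simpa using hh
        · simp; omega


lemma anc_iff_rtg {G : MixedGraph V} {a b : V} :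
    Ancestor G a b ↔ Relation.ReflTransGen G.dir a b :=
  ⟨rtg_of_anc, anc_of_rtg⟩


lemma anc_trans {G : MixedGraph V} {a b c : V} (h1 : Ancestor G a b)
    (h2 : Ancestor G b c) : Ancestor G a c :=
  anc_of_rtg ((rtg_of_anc h1).trans (rtg_of_anc h2))


lemma anc_of_dir {G : MixedGraph V} {a b : V} (h : G.dir a b) : Ancestor G a b :=
  anc_of_rtg (Relation.ReflTransGen.single h)

/- ===== remaining definitions (verbatim from problem file) ===== -/


lemma win_iff {p : List V} {u w v : V} :
    (∃ l₁ l₂, p = l₁ ++ u :: w :: v :: l₂) ↔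
      ∃ (i : ℕ) (h : i + 2 < p.length), p[i] = u ∧ p[i+1] = w ∧ p[i+2] = v := by
  constructor
  · rintro ⟨l₁, l₂, rfl⟩
    have hlen : l₁.length + 2 < (l₁ ++ u :: w :: v :: l₂).length := by simp
    refine ⟨l₁.length, hlen, ?_, ?_, ?_⟩
    · rw [List.getElem_append_right (by omega : l₁.length ≤ l₁.length)]; simp
    · rw [List.getElem_append_right (by omega : l₁.length ≤ l₁.length + 1)]; simp
    · rw [List.getElem_append_right (by omega : l₁.length ≤ l₁.length + 2)]; simp
  · rintro ⟨i, h, rfl, rfl, rfl⟩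
    refine ⟨p.take i, p.drop (i+3), ?_⟩
    have e1 : p.drop i = p[i] :: p.drop (i+1) := List.drop_eq_getElem_cons (by omega)
    have e2 : p.drop (i+1) = p[i+1] :: p.drop (i+2) := List.drop_eq_getElem_cons (by omega)
    have e3 : p.drop (i+2) = p[i+2] :: p.drop (i+3) := List.drop_eq_getElem_cons (by omega)
    conv_lhs => rw [← List.take_append_drop i p]
    congr 1
    rw [e1, e2, e3]


lemma intermediate_iff {p : List V} {w : V} :
    IsIntermediateOn p w ↔ ∃ (i : ℕ) (h : i + 2 < p.length), p[i+1] = w := by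
  constructor
  · rintro ⟨u, v, l₁, l₂, hp⟩
    obtain ⟨i, h, _, hw, _⟩ := win_iff.mp ⟨l₁, l₂, hp⟩
    exact ⟨i, h, hw⟩
  · rintro ⟨i, h, hw⟩
    exact ⟨p[i], p[i+2], _, _, (win_iff.mpr ⟨i, h, rfl, hw, rfl⟩).choose_spec.choose_spec⟩


lemma collider_iff {G : MixedGraph V} {p : List V} {w : V} :
    IsColliderOn G p w ↔ ∃ (i : ℕ) (h : i + 2 < p.length),
      p[i+1] = w ∧ ArrowInto G p[i] w ∧ ArrowInto G p[i+2] w := by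
  constructor
  · rintro ⟨u, v, l₁, l₂, hp, h1, h2⟩
    obtain ⟨i, h, hu, hw, hv⟩ := win_iff.mp ⟨l₁, l₂, hp⟩
    exact ⟨i, h, hw, hu ▸ h1, hv ▸ h2⟩
  · rintro ⟨i, h, hw, h1, h2⟩
    obtain ⟨l₁, l₂, hp⟩ := win_iff.mpr ⟨i, h, rfl, hw, rfl⟩
    exact ⟨p[i], p[i+2], l₁, l₂, hp, h1, h2⟩


/-- On a nodup list, the collider property at the (unique) position of an
intermediate vertex transfers to index form. -/
lemma collider_at_index {G : MixedGraph V} {p : List V} {i : ℕ}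
    (hnd : p.Nodup) (h : i + 2 < p.length) (hc : IsColliderOn G p p[i+1]) :
    ArrowInto G p[i] p[i+1] ∧ ArrowInto G p[i+2] p[i+1] := by
  obtain ⟨t, ht, hw, h1, h2⟩ := collider_iff.mp hc
  have : t + 1 = i + 1 := nodup_getElem_inj hnd (by omega) (by omega) hw
  obtain rfl : t = i := by omega
  exact ⟨h1, h2⟩


lemma noncollider_of_index {G : MixedGraph V} {p : List V} {i : ℕ}
    (hnd : p.Nodup) (h : i + 2 < p.length)
    (hnc : ¬ (ArrowInto G p[i] p[i+1] ∧ ArrowInto G p[i+2] p[i+1])) :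
    IsNonColliderOn G p p[i+1] :=
  ⟨intermediate_iff.mpr ⟨i, h, rfl⟩, fun hc => hnc (collider_at_index hnd h hc)⟩

/- ===== walks ===== -/


/-- A walk (repeats allowed) whose every window is m-open given `Z`. -/
def OkW (G : MixedGraph V) (Z : Set V) (p : List V) : Prop :=
  ∀ (i : ℕ) (h : i + 2 < p.length),
    ((ArrowInto G p[i] p[i+1] ∧ ArrowInto G p[i+2] p[i+1]) →
        ∃ d ∈ Z, Ancestor G p[i+1] d) ∧
    (¬ (ArrowInto G p[i] p[i+1] ∧ ArrowInto G p[i+2] p[i+1]) → p[i+1] ∉ Z)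


lemma mconnPath_of_nodup_okw {G : MixedGraph V} {Z : Set V} {p : List V} {a b : V}
    (hch : List.Chain' G.adj p) (hnd : p.Nodup) (hh : p.head? = some a)
    (hl : p.getLast? = some b) (hlen : 2 ≤ p.length)
    (hok : OkW G Z p) (ha : a ∉ Z) (hb : b ∉ Z) : MConnPath G Z p a b := by
  refine ⟨⟨hch, hnd, hh, hl, hlen⟩, ha, hb, ?_, ?_⟩
  · rintro w ⟨hint, hncol⟩
    obtain ⟨i, hi, hw⟩ := intermediate_iff.mp hint
    subst hw
    refine (hok i hi).2 ?_
    intro hboth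
    exact hncol (collider_iff.mpr ⟨i, hi, rfl, hboth.1, hboth.2⟩)
  · intro w hcol
    obtain ⟨i, hi, hw, h1, h2⟩ := collider_iff.mp hcol
    subst hw
    exact (hok i hi).1 ⟨h1, h2⟩


lemma getElem_idx_congr {p : List V} {i j : ℕ} (h : i = j) (hi : i < p.length) :
    p[i] = p[j]'(h ▸ hi) := by subst h; rfl


lemma fwd_chase {G : MixedGraph V} {Z : Set V} {p : List V}
    (hch : List.Chain' G.adj p) (hok : OkW G Z p) {j : ℕ} (hj : j < p.length)
    (hnoarrow : ¬ ArrowInto G (p[j-1]'(by omega)) p[j]) :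
    ∀ (k t : ℕ), j - t ≤ k → ∀ (htj : t < j),
      G.dir (p[t]'(by omega)) (p[t+1]'(by omega)) →
      ∃ d ∈ Z, Ancestor G (p[t+1]'(by omega)) d := by
  intro k
  induction k with
  | zero => intro t hk htj; omega
  | succ k ih =>
    intro t hk htj hd
    by_cases hteq : t + 1 = j
    · exfalso
      apply hnoarrow
      have e1 : p[j-1]'(by omega) = p[t]'(by omega) := getElem_idx_congr (by omega) (by omega)
      have e2 : p[j] = p[t+1]'(by omega) := getElem_idx_congr (by omega) (by omega)
      rw [e1, e2]
      exact Or.inl hd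
    · have ht2 : t + 2 < p.length := by omega
      by_cases harr : ArrowInto G p[t+2] p[t+1]
      · exact (hok t ht2).1 ⟨Or.inl hd, harr⟩
      · have hadj : G.adj p[t+1] p[t+2] := chain'_getElem hch (t+1) (by omega)
        have hdir2 : G.dir p[t+1] p[t+2] := dir_of_adj_not_arrow (adj_symm hadj) harr
        obtain ⟨d, hdZ, hanc⟩ := ih (t+1) (by omega) (by omega) hdir2
        exact ⟨d, hdZ, anc_trans (anc_of_dir hdir2) hanc⟩


lemma sc_left {p : List V} {i j : ℕ} (hij : i < j) (hj : j < p.length)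
    {q : List V} (hq : q = p.take (i+1) ++ p.drop (j+1)) :
    ∀ (t : ℕ) (ht : t ≤ i) (h : t < q.length), q[t] = p[t]'(by omega) := by
  subst hq
  intro t ht h
  rw [List.getElem_append_left (by rw [List.length_take]; omega)]
  simp [List.getElem_take]


lemma sc_right {p : List V} {i j : ℕ} (hij : i < j) (hj : j < p.length)
    {q : List V} (hq : q = p.take (i+1) ++ p.drop (j+1)) :
    ∀ (t : ℕ) (ht : i + 1 ≤ t) (h : t < q.length),
      q[t] = p[t + (j-i)]'(by subst hq; simp only [List.length_append,
        List.length_take, List.length_drop] at h; omega) := by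
  subst hq
  intro t ht h
  rw [List.getElem_append_right (by rw [List.length_take]; omega)]
  rw [List.getElem_drop]
  exact getElem_idx_congr (by rw [List.length_take]; omega) (by
    simp only [List.length_append, List.length_take, List.length_drop] at h
    rw [List.length_take]; omega)


/-- From an m-open walk we can extract an m-connecting path. -/
lemma walk_to_path {G : MixedGraph V} {Z : Set V} {a b : V} :
    ∀ (N : ℕ) (p : List V), p.length ≤ N →
    List.Chain' G.adj p → p.head? = some a → p.getLast? = some b → 2 ≤ p.length →
    a ≠ b → a ∉ Z → b ∉ Z → OkW G Z p → ∃ q, MConnPath G Z q a b := by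
  intro N
  induction N with
  | zero => intro p hN _ _ _ hlen; omega
  | succ N ih =>
    intro p hN hch hh hl hlen hab ha hb hok
    by_cases hnd : p.Nodup
    · exact ⟨p, mconnPath_of_nodup_okw hch hnd hh hl hlen hok ha hb⟩
    · have hninj : ¬ Function.Injective p.get := fun hinj =>
        hnd (List.nodup_iff_injective_get.mpr hinj)
      obtain ⟨x, y', hxy, hne⟩ := Function.not_injective_iff.mp hninj
      obtain ⟨i, j, hij, hjlt, hpij⟩ :
          ∃ (i j : ℕ) (_ : i < j) (_ : j < p.length), p[i]'(by omega) = p[j]'(by omega) := by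
        rcases hne.lt_or_gt with hlt | hlt
        · exact ⟨x.1, y'.1, hlt, y'.2, by simpa [List.get_eq_getElem] using hxy⟩
        · exact ⟨y'.1, x.1, hlt, x.2, by simpa [List.get_eq_getElem] using hxy.symm⟩
      have hpa : p[0]'(by omega) = a := by
        have := head?_eq_getElem (p := p) (by omega); rw [hh] at this
        exact (Option.some_inj.mp this).symm
      have hpb : p[p.length-1]'(by omega) = b := by
        have := getLast?_eq_getElem (p := p) (by omega); rw [hl] at this
        exact (Option.some_inj.mp this).symm
      set q := p.take (i+1) ++ p.drop (j+1) with hq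
      have hql : q.length = i + 1 + (p.length - (j+1)) := by
        rw [hq, List.length_append, List.length_take, List.length_drop]
        omega
      have hget1 := sc_left hij hjlt hq
      have hget2 := sc_right hij hjlt hq
      have hq0 : 0 < q.length := by omega
      have hqh : q.head? = some a := by
        rw [head?_eq_getElem hq0, hget1 0 (by omega) hq0, hpa]
      have hqlast : q.getLast? = some b := by
        rw [getLast?_eq_getElem hq0]
        rcases Nat.lt_or_ge (j+1) p.length with hjn | hjn
        · rw [hget2 (q.length - 1) (by omega) (by omega)]
          rw [getElem_idx_congr (show q.length - 1 + (j-i) = p.length-1 by omega) (by omega), hpb]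
        · rw [hget1 (q.length - 1) (by omega) (by omega)]
          rw [getElem_idx_congr (show q.length - 1 = i by omega) (by omega), hpij,
            getElem_idx_congr (show j = p.length-1 by omega) (by omega), hpb]
      have hq2 : 2 ≤ q.length := by
        rcases Nat.lt_or_ge (j+1) p.length with hjn | hjn
        · omega
        · rcases Nat.eq_zero_or_pos i with rfl | hipos
          · exfalso
            apply hab
            rw [← hpa, ← hpb, ← getElem_idx_congr (show j = p.length - 1 by omega) (by omega), ← hpij]
          · omega
      have hqch : List.Chain' G.adj q := by
        apply chain'_of_getElem
        intro t ht
        rcases Nat.lt_or_ge (t+1) (i+1) with hc1 | hc1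
        · rw [hget1 t (by omega) (by omega), hget1 (t+1) (by omega) (by omega)]
          exact chain'_getElem hch t (by omega)
        rcases Nat.lt_or_ge t (i+1) with hc2 | hc2
        · rw [hget1 t (by omega) (by omega), hget2 (t+1) (by omega) (by omega)]
          rw [getElem_idx_congr (show t = i by omega) (by omega), hpij,
            getElem_idx_congr (show t+1+(j-i) = j+1 by omega) (by omega)]
          exact chain'_getElem hch j (by omega)
        · rw [hget2 t (by omega) (by omega), hget2 (t+1) (by omega) (by omega),
            getElem_idx_congr (show t+1+(j-i) = t+(j-i)+1 by omega) (by omega)]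
          exact chain'_getElem hch (t+(j-i)) (by omega)
      have hqok : OkW G Z q := by
        intro t ht
        rcases Nat.lt_or_ge (t+2) (i+1) with hc1 | hc1
        · have e0 := hget1 t (by omega) (by omega)
          have e1 := hget1 (t+1) (by omega) (by omega)
          have e2 := hget1 (t+2) (by omega) (by omega)
          rw [e0, e1, e2]
          exact hok t (by omega)
        rcases Nat.lt_or_ge (i+1) (t+1) with hc2 | hc2
        · have e0 := hget2 t (by omega) (by omega)
          have e1 := hget2 (t+1) (by omega) (by omega)
          have e2 := hget2 (t+2) (by omega) (by omega)
          rw [e0, e1, e2]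
          rw [getElem_idx_congr (show t+1+(j-i) = t+(j-i)+1 by omega) (by omega),
            getElem_idx_congr (show t+2+(j-i) = t+(j-i)+2 by omega) (by omega)]
          exact hok (t+(j-i)) (by omega)
        rcases Nat.lt_or_ge t i with hc3 | hc3
        · -- junction window : t+1 = i
          have hti : t + 1 = i := by omega
          have e0 := hget1 t (by omega) (by omega)
          have e1 := hget1 (t+1) (by omega) (by omega)
          have e2 := hget2 (t+2) (by omega) (by omega)
          have hj1n : j + 1 < p.length := by omega
          rw [e0, e1, e2, getElem_idx_congr (show t+2+(j-i) = j+1 by omega) (by omega)]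
          have hw : (p[t+1]'(by omega) : V) = p[j]'(by omega) := by
            rw [getElem_idx_congr (show t+1 = i by omega) (by omega)]; exact hpij
          constructor
          · rintro ⟨harr1, harr2⟩
            by_cases hA2 : ArrowInto G (p[t+2]'(by omega)) (p[t+1]'(by omega))
            · exact (hok t (by omega)).1 ⟨harr1, hA2⟩
            · by_cases hA3 : ArrowInto G (p[j-1]'(by omega)) (p[j]'(by omega))
              · have hwin := (hok (j-1) (by omega)).1
                rw [getElem_idx_congr (show j-1+1 = j by omega) (by omega),
                  getElem_idx_congr (show j-1+2 = j+1 by omega) (by omega)] at hwin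
                obtain ⟨d, hdZ, hanc⟩ := hwin ⟨hA3, by rw [← hw]; exact harr2⟩
                exact ⟨d, hdZ, by rw [hw]; exact hanc⟩
              · have hadj : G.adj (p[t+1]'(by omega)) (p[t+2]'(by omega)) :=
                  chain'_getElem hch (t+1) (by omega)
                have hdir : G.dir (p[t+1]'(by omega)) (p[t+2]'(by omega)) :=
                  dir_of_adj_not_arrow (adj_symm hadj) hA2
                obtain ⟨d, hdZ, hanc⟩ := fwd_chase hch hok (j := j) (by omega) hA3
                  j (t+1) (by omega) (by omega) hdir
                exact ⟨d, hdZ, anc_trans (anc_of_dir hdir) hanc⟩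
          · intro hnb
            rcases not_and_or.mp hnb with h1 | h2
            · exact (hok t (by omega)).2 (fun hb' => h1 hb'.1)
            · have hwin := (hok (j-1) (by omega)).2
              rw [getElem_idx_congr (show j-1+1 = j by omega) (by omega),
                getElem_idx_congr (show j-1+2 = j+1 by omega) (by omega)] at hwin
              rw [hw]
              apply hwin
              rintro ⟨_, harr2⟩
              exact h2 (by rw [hw]; exact harr2)
        · -- t = i : window corresponds to original window at j
          have hti : t = i := by omega
          have e0 := hget1 t (by omega) (by omega)
          have e1 := hget2 (t+1) (by omega) (by omega)
          have e2 := hget2 (t+2) (by omega) (by omega)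
          rw [e0, e1, e2, getElem_idx_congr (show t+1+(j-i) = j+1 by omega) (by omega),
            getElem_idx_congr (show t+2+(j-i) = j+2 by omega) (by omega)]
          have hwj : (p[t]'(by omega) : V) = p[j]'(by omega) := by
            rw [getElem_idx_congr (show t = i by omega) (by omega)]; exact hpij
          rw [hwj]
          exact hok j (by omega)
      have hqN : q.length ≤ N := by omega
      exact ih q hqN hqch hqh hqlast hq2 hab ha hb hqok


lemma take_getElem {p : List V} {m t : ℕ} (ht : t < m) (h : t < p.length) :
    (p.take m)[t]'(by rw [List.length_take]; omega) = p[t] := List.getElem_take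



lemma take_only_getElem {p q : List V} {m : ℕ} (hq : q = p.take m) (t : ℕ)
    (ht : t < m) (hp : t < p.length) (h : t < q.length) : q[t] = p[t] := by
  subst hq; exact List.getElem_take


lemma take_app_getElem {p r q : List V} {m : ℕ} (hq : q = p.take m ++ r) (t : ℕ)
    (ht : t < m) (hp : t < p.length) (h : t < q.length) : q[t] = p[t] := by
  subst hq
  rw [List.getElem_append_left (by rw [List.length_take]; omega)]
  exact List.getElem_take


lemma take_app_getElem_right {p r q : List V} {m : ℕ} (hq : q = p.take m ++ r)
    (hm : m ≤ p.length) (t : ℕ) (ht : m ≤ t) (h : t < q.length) :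
    q[t] = r[t-m]'(by subst hq; rw [List.length_append, List.length_take] at h; omega) := by
  subst hq
  have hlt : (p.take m).length = m := by rw [List.length_take]; omega
  rw [List.getElem_append_right (by omega)]
  exact getElem_idx_congr (by omega) (by rw [List.length_append] at h; omega)


lemma drop_getElem'' {e r : List V} {d : ℕ} (hr : r = e.drop d) (k : ℕ)
    (h : k < r.length) : r[k] = e[d+k]'(by subst hr; rw [List.length_drop] at h; omega) := by
  subst hr; exact List.getElem_drop


lemma rev_app_getElem_left {e r q : List V} (hq : q = e.reverse ++ r) (t : ℕ)
    (ht : t < e.length) (h : t < q.length) : q[t] = e[e.length-1-t]'(by omega) := by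
  subst hq
  have hl : e.reverse.length = e.length := List.length_reverse
  rw [List.getElem_append_left (by omega)]
  exact List.getElem_reverse _


lemma rev_app_getElem_right {e r q : List V} (hq : q = e.reverse ++ r) (t : ℕ)
    (ht : e.length ≤ t) (h : t < q.length) :
    q[t] = r[t - e.length]'(by
      subst hq; rw [List.length_append, List.length_reverse] at h; omega) := by
  subst hq
  have hl : e.reverse.length = e.length := List.length_reverse
  rw [List.getElem_append_right (by omega)]
  exact getElem_idx_congr (by omega) (by rw [List.length_append] at h; omega)


set_option maxHeartbeats 1600000 in
/-- The inducing-path lemma: given a walk whose every window is either an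
m-open non-collider or a collider that is an ancestor of `s`, `y` or `Z`,
the endpoints are m-connected given `Z`. -/
lemma inducing_aux {G : MixedGraph V} {Z : Set V} {s y : V}
    (hs : s ∉ Z) (hy : y ∉ Z) (hsy : s ≠ y) :
    ∀ (m : ℕ) (p : List V),
    List.Chain' G.adj p → p.head? = some s → p.getLast? = some y → 2 ≤ p.length →
    (∀ (i : ℕ) (h : i+2 < p.length),
      (ArrowInto G p[i] p[i+1] ∧ ArrowInto G p[i+2] p[i+1] ∧
        (Ancestor G p[i+1] s ∨ Ancestor G p[i+1] y ∨ ∃ d ∈ Z, Ancestor G p[i+1] d)) ∨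
      (¬(ArrowInto G p[i] p[i+1] ∧ ArrowInto G p[i+2] p[i+1]) ∧ p[i+1] ∉ Z)) →
    (∀ (i : ℕ) (h : i+2 < p.length),
      (ArrowInto G p[i] p[i+1] ∧ ArrowInto G p[i+2] p[i+1] ∧
        ¬ ∃ d ∈ Z, Ancestor G p[i+1] d) → p.length - i ≤ m) →
    MConn G Z s y := by
  intro m
  induction m with
  | zero =>
    intro p hch hh hl hlen hInv hbound
    by_cases hbad : ∃ (i : ℕ) (h : i+2 < p.length),
        ArrowInto G p[i] p[i+1] ∧ ArrowInto G p[i+2] p[i+1] ∧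
          ¬ ∃ d ∈ Z, Ancestor G p[i+1] d
    · obtain ⟨i, hi, hbd⟩ := hbad
      have := hbound i hi hbd
      omega
    · refine walk_to_path p.length p le_rfl hch hh hl hlen hsy hs hy ?_
      intro i hi
      constructor
      · rintro ⟨a1, a2⟩
        rcases hInv i hi with ⟨_, _, h3⟩ | ⟨hn, _⟩
        · rcases h3 with h3 | h3 | h3
          · by_contra hnd
            exact hbad ⟨i, hi, a1, a2, hnd⟩
          · by_contra hnd
            exact hbad ⟨i, hi, a1, a2, hnd⟩
          · exact h3
        · exact absurd ⟨a1, a2⟩ hn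
      · intro hnb
        rcases hInv i hi with ⟨a1, a2, _⟩ | ⟨_, h2⟩
        · exact absurd ⟨a1, a2⟩ hnb
        · exact h2
  | succ m ih =>
    intro p hch hh hl hlen hInv hbound
    by_cases hbad : ∃ (i : ℕ) (h : i+2 < p.length),
        ArrowInto G p[i] p[i+1] ∧ ArrowInto G p[i+2] p[i+1] ∧
          ¬ ∃ d ∈ Z, Ancestor G p[i+1] d
    swap
    · refine walk_to_path p.length p le_rfl hch hh hl hlen hsy hs hy ?_
      intro i hi
      constructor
      · rintro ⟨a1, a2⟩
        rcases hInv i hi with ⟨_, _, h3⟩ | ⟨hn, _⟩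
        · rcases h3 with h3 | h3 | h3
          · by_contra hnd
            exact hbad ⟨i, hi, a1, a2, hnd⟩
          · by_contra hnd
            exact hbad ⟨i, hi, a1, a2, hnd⟩
          · exact h3
        · exact absurd ⟨a1, a2⟩ hn
      · intro hnb
        rcases hInv i hi with ⟨a1, a2, _⟩ | ⟨_, h2⟩
        · exact absurd ⟨a1, a2⟩ hnb
        · exact h2
    · -- there is a bad collider; take the least one
      obtain ⟨i₀, ⟨hval, ha1, ha2, hnod⟩, hmin⟩ :
          ∃ i₀, (∃ (h : i₀+2 < p.length),
            ArrowInto G p[i₀] p[i₀+1] ∧ ArrowInto G p[i₀+2] p[i₀+1] ∧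
              ¬ ∃ d ∈ Z, Ancestor G p[i₀+1] d) ∧
            (∀ t, t < i₀ → ¬ ∃ (h : t+2 < p.length),
              ArrowInto G p[t] p[t+1] ∧ ArrowInto G p[t+2] p[t+1] ∧
                ¬ ∃ d ∈ Z, Ancestor G p[t+1] d) := by
        haveI : DecidablePred fun i => ∃ (h : i+2 < p.length),
            ArrowInto G p[i] p[i+1] ∧ ArrowInto G p[i+2] p[i+1] ∧
              ¬ ∃ d ∈ Z, Ancestor G p[i+1] d := Classical.decPred _
        exact ⟨Nat.find hbad, Nat.find_spec hbad, fun t htl => Nat.find_min hbad htl⟩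
      have hcZ : p[i₀+1] ∉ Z := fun hc => hnod ⟨p[i₀+1], hc, anc_refl G _⟩
      have hbnd0 : p.length - i₀ ≤ m + 1 := hbound i₀ hval ⟨ha1, ha2, hnod⟩
      have hanc : Ancestor G p[i₀+1] s ∨ Ancestor G p[i₀+1] y := by
        rcases hInv i₀ hval with ⟨_, _, h3⟩ | ⟨hn, _⟩
        · rcases h3 with h3 | h3 | h3
          · exact Or.inl h3
          · exact Or.inr h3
          · exact absurd h3 hnod
        · exact absurd ⟨ha1, ha2⟩ hn
      have hpa : p[0]'(by omega) = s := by
        have := head?_eq_getElem (p := p) (by omega); rw [hh] at this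
        exact (Option.some_inj.mp this).symm
      have hpb : p[p.length-1]'(by omega) = y := by
        have := getLast?_eq_getElem (p := p) (by omega); rw [hl] at this
        exact (Option.some_inj.mp this).symm
      rcases hanc with hancs | hancy
      rotate_left
      · -- ancestor of y: reroute the tail of the walk
        by_cases hcy : p[i₀+1] = y
        · -- p[i₀+1] = y : truncate
          set q := p.take (i₀+2) with hq
          have hqlen : q.length = i₀ + 2 := by
            rw [hq, List.length_take]; omega
          have hg1 : ∀ (t : ℕ) (h : t < q.length), q[t] = p[t]'(by rw [hqlen] at h; omega) := by
            intro t h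
            exact take_only_getElem hq t (by rw [hqlen] at h; omega)
              (by rw [hqlen] at h; omega) h
          refine walk_to_path q.length q le_rfl ?_ ?_ ?_ (by omega) hsy hs hy ?_
          · exact hch.prefix (List.take_prefix _ _)
          · rw [head?_eq_getElem (by omega), hg1 0 (by omega), hpa]
          · rw [getLast?_eq_getElem (by omega), hg1 (q.length - 1) (by omega),
              getElem_idx_congr (show q.length - 1 = i₀+1 by omega) (by omega), hcy]
          · intro t htq
            have e0 := hg1 t (by omega)
            have e1 := hg1 (t+1) (by omega)
            have e2 := hg1 (t+2) (by omega)
            rw [e0, e1, e2]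
            have htlt : t < i₀ := by rw [hqlen] at htq; omega
            constructor
            · rintro ⟨a1, a2⟩
              rcases hInv t (by omega) with ⟨_, _, h3⟩ | ⟨hn, _⟩
              · rcases h3 with h3 | h3 | h3
                · by_contra hnd
                  exact hmin t htlt ⟨by omega, a1, a2, hnd⟩
                · by_contra hnd
                  exact hmin t htlt ⟨by omega, a1, a2, hnd⟩
                · exact h3
              · exact absurd ⟨a1, a2⟩ hn
            · intro hnb
              rcases hInv t (by omega) with ⟨a1, a2, _⟩ | ⟨_, h2⟩
              · exact absurd ⟨a1, a2⟩ hnb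
              · exact h2
        · -- p[i₀+1] ≠ y : append a directed path to y
          obtain ⟨e, hech, hend, heh, hel, helen⟩ :
              ∃ e, IsDirectedPath G e p[i₀+1] y := by
            rcases hancy with h | h
            · exact absurd h hcy
            · exact h
          have hec0 : e[0]'(by omega) = p[i₀+1] := by
            have := head?_eq_getElem (p := e) (by omega); rw [heh] at this
            exact (Option.some_inj.mp this).symm
          have heclast : e[e.length-1]'(by omega) = y := by
            have := getLast?_eq_getElem (p := e) (by omega); rw [hel] at this
            exact (Option.some_inj.mp this).symm
          have hanc_e : ∀ (r : ℕ) (hr : r < e.length), Ancestor G p[i₀+1] (e[r]'hr) := by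
            intro r hr
            rw [← hec0]
            exact anc_of_rtg (rtg_of_chain' hech (by omega) hr)
          set q := p.take (i₀+2) ++ e.drop 1 with hq
          have hqlen : q.length = (i₀+2) + (e.length - 1) := by
            rw [hq, List.length_append, List.length_take, List.length_drop]; omega
          have hg1 : ∀ (t : ℕ) (ht : t ≤ i₀+1) (h : t < q.length),
              q[t] = p[t]'(by omega) := by
            intro t ht h
            exact take_app_getElem hq t (by omega) (by omega) h
          have hg2 : ∀ (t : ℕ) (ht : i₀+2 ≤ t) (h : t < q.length),
              q[t] = e[t - (i₀+1)]'(by rw [hqlen] at h; omega) := by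
            intro t ht h
            rw [take_app_getElem_right hq (by omega) t (by omega) h,
              drop_getElem'' rfl (t-(i₀+2))
                (by rw [List.length_drop]; rw [hqlen] at h; omega)]
            exact getElem_idx_congr (show 1+(t-(i₀+2)) = t-(i₀+1) by omega)
              (by rw [hqlen] at h; omega)
          have hg3 : ∀ (t : ℕ) (ht : i₀+1 ≤ t) (h : t < q.length),
              q[t] = e[t - (i₀+1)]'(by rw [hqlen] at h; omega) := by
            intro t ht h
            rcases Nat.eq_or_lt_of_le ht with rfl | hlt
            · rw [hg1 (i₀+1) le_rfl h,
                getElem_idx_congr (show i₀+1-(i₀+1) = 0 by omega) (by rw [hqlen] at h; omega)]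
              exact hec0.symm
            · exact hg2 t (by omega) h
          refine walk_to_path q.length q le_rfl ?_ ?_ ?_ (by omega) hsy hs hy ?_
          · apply chain'_of_getElem
            intro t ht
            rcases Nat.lt_or_ge (t+1) (i₀+2) with hc1 | hc1
            · rw [hg1 t (by omega) (by omega), hg1 (t+1) (by omega) (by omega)]
              exact chain'_getElem hch t (by omega)
            · rw [hg3 t (by omega) (by omega), hg3 (t+1) (by omega) (by omega),
                getElem_idx_congr (show t+1-(i₀+1) = (t-(i₀+1))+1 by omega)
                  (by rw [hqlen] at ht; omega)]
              exact adj_of_arrow (Or.inl (chain'_getElem hech (t-(i₀+1))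
                (by rw [hqlen] at ht; omega)))
          · rw [head?_eq_getElem (by omega), hg1 0 (by omega) (by omega), hpa]
          · rw [getLast?_eq_getElem (by omega), hg2 (q.length - 1) (by omega) (by omega),
              getElem_idx_congr (show q.length - 1 - (i₀+1) = e.length - 1 by omega)
                (by omega), heclast]
          · intro t htq
            rcases Nat.lt_or_ge (t+2) (i₀+2) with hc1 | hc1
            · -- prefix window, strictly before i₀
              have e0 := hg1 t (by omega) (by omega)
              have e1 := hg1 (t+1) (by omega) (by omega)
              have e2 := hg1 (t+2) (by omega) (by omega)
              rw [e0, e1, e2]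
              have htlt : t < i₀ := by omega
              constructor
              · rintro ⟨a1, a2⟩
                rcases hInv t (by omega) with ⟨_, _, h3⟩ | ⟨hn, _⟩
                · rcases h3 with h3 | h3 | h3
                  · by_contra hnd
                    exact hmin t htlt ⟨by omega, a1, a2, hnd⟩
                  · by_contra hnd
                    exact hmin t htlt ⟨by omega, a1, a2, hnd⟩
                  · exact h3
                · exact absurd ⟨a1, a2⟩ hn
              · intro hnb
                rcases hInv t (by omega) with ⟨a1, a2, _⟩ | ⟨_, h2⟩
                · exact absurd ⟨a1, a2⟩ hnb
                · exact h2
            · -- inside or at the start of the directed path: non-collider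
              have e1 := hg3 (t+1) (by omega) (by omega)
              have e2 := hg3 (t+2) (by omega) (by omega)
              rw [e1, e2, getElem_idx_congr (show t+2-(i₀+1) = (t+1-(i₀+1))+1 by omega)
                (by rw [hqlen] at htq; omega)]
              have hdir : G.dir (e[t+1-(i₀+1)]'(by rw [hqlen] at htq; omega))
                  (e[(t+1-(i₀+1))+1]'(by rw [hqlen] at htq; omega)) :=
                chain'_getElem hech (t+1-(i₀+1)) (by rw [hqlen] at htq; omega)
              constructor
              · rintro ⟨_, a2⟩
                exact absurd a2 (not_arrowInto_of_dir hdir)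
              · intro _
                intro hmem
                exact hnod ⟨_, hmem, hanc_e (t+1-(i₀+1)) (by rw [hqlen] at htq; omega)⟩
      · -- ancestor of s: reroute the head of the walk, then recurse
        by_cases hcs : p[i₀+1] = s
        · -- p[i₀+1] = s : drop the prefix
          set q := p.drop (i₀+1) with hq
          have hqlen : q.length = p.length - (i₀+1) := by
            rw [hq, List.length_drop]
          have hg : ∀ (t : ℕ) (h : t < q.length),
              q[t] = p[i₀+1+t]'(by rw [hqlen] at h; omega) := by
            intro t h
            exact drop_getElem'' hq t h
          refine ih q ?_ ?_ ?_ (by omega) ?_ ?_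
          · apply chain'_of_getElem
            intro t ht
            rw [hg t (by omega), hg (t+1) (by omega),
              getElem_idx_congr (show i₀+1+(t+1) = (i₀+1+t)+1 by omega)
                (by rw [hqlen] at ht; omega)]
            exact chain'_getElem hch (i₀+1+t) (by rw [hqlen] at ht; omega)
          · rw [head?_eq_getElem (by omega), hg 0 (by omega),
              getElem_idx_congr (show i₀+1+0 = i₀+1 by omega) (by omega), hcs]
          · rw [getLast?_eq_getElem (by omega), hg (q.length - 1) (by omega),
              getElem_idx_congr (show i₀+1+(q.length-1) = p.length - 1 by omega)
                (by omega), hpb]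
          · intro t ht
            have e0 := hg t (by omega)
            have e1 := hg (t+1) (by omega)
            have e2 := hg (t+2) (by omega)
            rw [e0, e1, e2,
              getElem_idx_congr (show i₀+1+(t+1) = (i₀+1+t)+1 by omega)
                (by rw [hqlen] at ht; omega),
              getElem_idx_congr (show i₀+1+(t+2) = (i₀+1+t)+2 by omega)
                (by rw [hqlen] at ht; omega)]
            exact hInv (i₀+1+t) (by rw [hqlen] at ht; omega)
          · intro t ht _
            rw [hqlen]
            omega
        · -- p[i₀+1] ≠ s : replace the prefix by a reversed directed path to s
          obtain ⟨e, hech, hend, heh, hel, helen⟩ :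
              ∃ e, IsDirectedPath G e p[i₀+1] s := by
            rcases hancs with h | h
            · exact absurd h hcs
            · exact h
          have hec0 : e[0]'(by omega) = p[i₀+1] := by
            have := head?_eq_getElem (p := e) (by omega); rw [heh] at this
            exact (Option.some_inj.mp this).symm
          have heclast : e[e.length-1]'(by omega) = s := by
            have := getLast?_eq_getElem (p := e) (by omega); rw [hel] at this
            exact (Option.some_inj.mp this).symm
          have hanc_e : ∀ (r : ℕ) (hr : r < e.length), Ancestor G p[i₀+1] (e[r]'hr) := by
            intro r hr
            rw [← hec0]
            exact anc_of_rtg (rtg_of_chain' hech (by omega) hr)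
          set q := e.reverse ++ p.drop (i₀+2) with hq
          have hqlen : q.length = e.length + (p.length - (i₀+2)) := by
            rw [hq, List.length_append, List.length_reverse, List.length_drop]
          have hg1 : ∀ (t : ℕ) (ht : t < e.length) (h : t < q.length),
              q[t] = e[e.length-1-t]'(by omega) := by
            intro t ht h
            exact rev_app_getElem_left hq t ht h
          have hg2 : ∀ (t : ℕ) (ht : e.length ≤ t) (h : t < q.length),
              q[t] = p[t - e.length + (i₀+2)]'(by rw [hqlen] at h; omega) := by
            intro t ht h
            rw [rev_app_getElem_right hq t ht h,
              drop_getElem'' rfl (t - e.length)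
                (by rw [List.length_drop]; rw [hqlen] at h; omega)]
            exact getElem_idx_congr (show (i₀+2)+(t-e.length) = t - e.length + (i₀+2) by omega)
              (by rw [hqlen] at h; omega)
          refine ih q ?_ ?_ ?_ (by omega) ?_ ?_
          · apply chain'_of_getElem
            intro t ht
            rcases Nat.lt_or_ge (t+1) e.length with hc1 | hc1
            · rw [hg1 t (by omega) (by omega), hg1 (t+1) (by omega) (by omega),
                getElem_idx_congr (show e.length-1-t = (e.length-1-(t+1))+1 by omega)
                  (by omega)]
              exact adj_symm (adj_of_arrow (Or.inl
                (chain'_getElem hech (e.length-1-(t+1)) (by omega))))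
            rcases Nat.lt_or_ge t e.length with hc2 | hc2
            · -- t = e.length - 1 : junction
              rw [hg1 t (by omega) (by omega), hg2 (t+1) (by omega) (by omega),
                getElem_idx_congr (show e.length-1-t = 0 by omega) (by omega), hec0,
                getElem_idx_congr (show t+1-e.length+(i₀+2) = i₀+2 by omega) (by omega)]
              exact chain'_getElem hch (i₀+1) (by rw [hqlen] at ht; omega)
            · rw [hg2 t (by omega) (by omega), hg2 (t+1) (by omega) (by omega),
                getElem_idx_congr (show t+1-e.length+(i₀+2) = (t-e.length+(i₀+2))+1 by omega)
                  (by rw [hqlen] at ht; omega)]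
              exact chain'_getElem hch (t-e.length+(i₀+2)) (by rw [hqlen] at ht; omega)
          · rw [head?_eq_getElem (by omega), hg1 0 (by omega) (by omega),
              getElem_idx_congr (show e.length-1-0 = e.length-1 by omega) (by omega), heclast]
          · rw [getLast?_eq_getElem (by omega), hg2 (q.length - 1) (by omega) (by omega),
              getElem_idx_congr (show q.length-1-e.length+(i₀+2) = p.length - 1 by omega)
                (by omega), hpb]
          · intro t ht
            rcases Nat.lt_or_ge (t+2) e.length with hc1 | hc1
            · -- strictly inside the reversed directed path : non-collider
              have e0 := hg1 t (by omega) (by omega)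
              have e1 := hg1 (t+1) (by omega) (by omega)
              rw [e0, e1]
              have hdir : G.dir (e[e.length-1-(t+1)]'(by omega)) (e[e.length-1-t]'(by omega)) := by
                rw [getElem_idx_congr (show e.length-1-t = (e.length-1-(t+1))+1 by omega)
                  (by omega)]
                exact chain'_getElem hech (e.length-1-(t+1)) (by omega)
              refine Or.inr ⟨?_, ?_⟩
              · rintro ⟨a1, _⟩
                exact absurd a1 (not_arrowInto_of_dir hdir)
              · intro hmem
                exact hnod ⟨_, hmem, hanc_e (e.length-1-(t+1)) (by omega)⟩
            rcases Nat.lt_or_ge (t+1) e.length with hc2 | hc2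
            · -- t+2 = e.length : window (e[1], e[0], p[i₀+2])
              have e0 := hg1 t (by omega) (by omega)
              have e1 := hg1 (t+1) (by omega) (by omega)
              rw [e0, e1,
                getElem_idx_congr (show e.length-1-(t+1) = 0 by omega) (by omega), hec0]
              have hdir : G.dir p[i₀+1] (e[e.length-1-t]'(by omega)) := by
                rw [← hec0, getElem_idx_congr (show e.length-1-t = 0+1 by omega) (by omega)]
                exact chain'_getElem hech 0 (by omega)
              refine Or.inr ⟨?_, ?_⟩
              · rintro ⟨a1, _⟩
                exact absurd a1 (not_arrowInto_of_dir hdir)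
              · intro hmem
                exact hcZ hmem
            rcases Nat.lt_or_ge t e.length with hc3 | hc3
            · -- t+1 = e.length : window (e[0], p[i₀+2], p[i₀+3]) = original at i₀+1
              have e0 := hg1 t (by omega) (by omega)
              have e1 := hg2 (t+1) (by omega) (by omega)
              have e2 := hg2 (t+2) (by omega) (by omega)
              rw [e0, e1, e2,
                getElem_idx_congr (show e.length-1-t = 0 by omega) (by omega), hec0,
                getElem_idx_congr (show t+1-e.length+(i₀+2) = (i₀+1)+1 by omega)
                  (by rw [hqlen] at ht; omega),
                getElem_idx_congr (show t+2-e.length+(i₀+2) = (i₀+1)+2 by omega)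
                  (by rw [hqlen] at ht; omega)]
              exact hInv (i₀+1) (by rw [hqlen] at ht; omega)
            · -- fully in the suffix
              have e0 := hg2 t (by omega) (by omega)
              have e1 := hg2 (t+1) (by omega) (by omega)
              have e2 := hg2 (t+2) (by omega) (by omega)
              rw [e0, e1, e2,
                getElem_idx_congr (show t+1-e.length+(i₀+2) = (t-e.length+(i₀+2))+1 by omega)
                  (by rw [hqlen] at ht; omega),
                getElem_idx_congr (show t+2-e.length+(i₀+2) = (t-e.length+(i₀+2))+2 by omega)
                  (by rw [hqlen] at ht; omega)]
              exact hInv (t-e.length+(i₀+2)) (by rw [hqlen] at ht; omega)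
          · -- bound : any bad window of q lies at index ≥ e.length - 1
            intro t ht hb
            rcases Nat.lt_or_ge (t+2) e.length with hc1 | hc1
            · exfalso
              have e0 := hg1 t (by omega) (by omega)
              have e1 := hg1 (t+1) (by omega) (by omega)
              have hdir : G.dir (e[e.length-1-(t+1)]'(by omega)) (e[e.length-1-t]'(by omega)) := by
                rw [getElem_idx_congr (show e.length-1-t = (e.length-1-(t+1))+1 by omega)
                  (by omega)]
                exact chain'_getElem hech (e.length-1-(t+1)) (by omega)
              rw [e0, e1] at hb
              exact absurd hb.1 (not_arrowInto_of_dir hdir)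
            rcases Nat.lt_or_ge (t+1) e.length with hc2 | hc2
            · exfalso
              have e0 := hg1 t (by omega) (by omega)
              have e1 := hg1 (t+1) (by omega) (by omega)
              rw [e0, e1, getElem_idx_congr (show e.length-1-(t+1) = 0 by omega)
                (by omega), hec0] at hb
              have hdir : G.dir p[i₀+1] (e[e.length-1-t]'(by omega)) := by
                rw [← hec0, getElem_idx_congr (show e.length-1-t = 0+1 by omega) (by omega)]
                exact chain'_getElem hech 0 (by omega)
              exact absurd hb.1 (not_arrowInto_of_dir hdir)
            · -- t ≥ e.length - 1
              rw [hqlen]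
              omega


lemma app_getElem_left' {a b q : List V} (hq : q = a ++ b) (t : ℕ)
    (ht : t < a.length) (h : t < q.length) : q[t] = a[t] := by
  subst hq; exact List.getElem_append_left ht


lemma app_getElem_last' {a q : List V} {c : V} (hq : q = a ++ [c])
    (h : a.length < q.length) : q[a.length] = c := by
  subst hq
  rw [List.getElem_append_right le_rfl]
  simp


set_option maxHeartbeats 1600000 in
/-- The key separation lemma: in a MAG, two non-adjacent vertices `s`, `y` are
m-separated by the set of vertices in the Markov blanket of `y` that are
ancestors of `s` or of `y` (other than `s` itself). -/
lemma msep_W {G : MixedGraph V} {s y : V} (hmag : IsMAG G) (hsy : s ≠ y)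
    (hnadj : ¬ G.adj s y) :
    MSep G {v | v ≠ s ∧ v ∈ MarkovBlanket G y ∧ (Ancestor G v s ∨ Ancestor G v y)} s y := by
  intro p hmc
  obtain ⟨⟨hch, hnd, hh, hl, hlen⟩, hsW, hyW, hnc, hcol⟩ := hmc
  have hpa : p[0]'(by omega) = s := by
    have := head?_eq_getElem (p := p) (by omega); rw [hh] at this
    exact (Option.some_inj.mp this).symm
  have hpb : p[p.length-1]'(by omega) = y := by
    have := getLast?_eq_getElem (p := p) (by omega); rw [hl] at this
    exact (Option.some_inj.mp this).symm
  have hlen3 : 3 ≤ p.length := by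
    by_contra hle
    have h2 : p.length = 2 := by omega
    apply hnadj
    have := chain'_getElem hch 0 (by omega)
    rw [hpa] at this
    rw [getElem_idx_congr (show 0+1 = p.length - 1 by omega) (by omega), hpb] at this
    exact this
  -- colliders are ancestors of s or y
  have hcolI : ∀ (i : ℕ) (h : i+2 < p.length), ArrowInto G p[i] p[i+1] →
      ArrowInto G p[i+2] p[i+1] → Ancestor G p[i+1] s ∨ Ancestor G p[i+1] y := by
    intro i h a1 a2
    obtain ⟨d, hdW, hanc⟩ := hcol p[i+1] (collider_iff.mpr ⟨i, h, rfl, a1, a2⟩)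
    obtain ⟨-, -, hd⟩ := hdW
    rcases hd with h' | h'
    · exact Or.inl (anc_trans hanc h')
    · exact Or.inr (anc_trans hanc h')
  -- leftward chase
  have hdesc : ∀ (t : ℕ) (ht : t+1 < p.length), G.dir p[t+1] p[t] →
      Ancestor G p[t] s ∨ Ancestor G p[t] y := by
    intro t
    induction t with
    | zero =>
      intro ht hd
      left
      rw [hpa]
      exact anc_refl G s
    | succ k ih =>
      intro ht hd
      by_cases harr : ArrowInto G p[k] p[k+1]
      · exact hcolI k (by omega) harr (Or.inl hd)
      · have hadj : G.adj p[k] p[k+1] := chain'_getElem hch k (by omega)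
        have hdir : G.dir p[k+1] p[k] := dir_of_adj_not_arrow hadj harr
        rcases ih (by omega) hdir with h' | h'
        · exact Or.inl (anc_trans (anc_of_dir hdir) h')
        · exact Or.inr (anc_trans (anc_of_dir hdir) h')
  -- main step : every intermediate vertex is a collider
  have hstep : ∀ (i : ℕ) (h : i+2 < p.length),
      (∀ (i' : ℕ), i < i' → ∀ (h' : i'+2 < p.length),
        ArrowInto G p[i'] p[i'+1] ∧ ArrowInto G p[i'+2] p[i'+1]) →
      ArrowInto G p[i] p[i+1] ∧ ArrowInto G p[i+2] p[i+1] := by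
    intro i h hsuf
    by_contra hCL
    -- the suffix from p[i+1] is a collider path to y, so p[i+1] ∈ MB(y)
    have hg : ∀ (t : ℕ) (ht : t < (p.drop (i+1)).length),
        (p.drop (i+1))[t] = p[(i+1)+t]'(by rw [List.length_drop] at ht; omega) :=
      fun t ht => drop_getElem'' rfl t ht
    have hrlen : (p.drop (i+1)).length = p.length - (i+1) := List.length_drop
    have hrpath : IsPathBetween G (p.drop (i+1)) p[i+1] y := by
      refine ⟨?_, hnd.sublist (List.drop_sublist _ _), ?_, ?_, by omega⟩
      · apply chain'_of_getElem
        intro t ht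
        rw [hg t (by omega), hg (t+1) (by omega),
          getElem_idx_congr (show (i+1)+(t+1) = ((i+1)+t)+1 by omega)
            (by rw [hrlen] at ht; omega)]
        exact chain'_getElem hch ((i+1)+t) (by rw [hrlen] at ht; omega)
      · rw [head?_eq_getElem (by omega), hg 0 (by omega),
          getElem_idx_congr (show (i+1)+0 = i+1 by omega) (by omega)]
      · rw [getLast?_eq_getElem (by omega), hg ((p.drop (i+1)).length - 1) (by omega),
          getElem_idx_congr (show (i+1)+((p.drop (i+1)).length - 1) = p.length - 1 by
            rw [hrlen]; omega) (by omega), hpb]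
    have hrint : ∀ w, IsIntermediateOn (p.drop (i+1)) w → IsColliderOn G (p.drop (i+1)) w := by
      intro w hint
      obtain ⟨t, htt, hwt⟩ := intermediate_iff.mp hint
      obtain ⟨hc1, hc2⟩ := hsuf ((i+1)+t) (by omega) (by rw [hrlen] at htt; omega)
      refine collider_iff.mpr ⟨t, htt, hwt, ?_, ?_⟩
      · rw [← hwt, hg t (by omega), hg (t+1) (by omega),
          getElem_idx_congr (show (i+1)+(t+1) = ((i+1)+t)+1 by omega)
            (by rw [hrlen] at htt; omega)]
        exact hc1
      · rw [← hwt, hg (t+1) (by omega), hg (t+2) (by omega),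
          getElem_idx_congr (show (i+1)+(t+1) = ((i+1)+t)+1 by omega)
            (by rw [hrlen] at htt; omega),
          getElem_idx_congr (show (i+1)+(t+2) = ((i+1)+t)+2 by omega)
            (by rw [hrlen] at htt; omega)]
        exact hc2
    have hvney : p[i+1] ≠ y := by
      intro he
      have : p[i+1] = p[p.length-1]'(by omega) := by rw [he, hpb]
      have := nodup_getElem_inj hnd (by omega) (by omega) this
      omega
    have hvnes : p[i+1] ≠ s := by
      intro he
      have : p[i+1] = p[0]'(by omega) := by rw [he, hpa]
      have := nodup_getElem_inj hnd (by omega) (by omega) this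
      omega
    have hmb : p[i+1] ∈ MarkovBlanket G y := by
      refine ⟨hvney, ?_⟩
      by_cases hadjy : G.adj p[i+1] y
      · exact Or.inl hadjy
      · exact Or.inr ⟨hadjy, p.drop (i+1), hrpath, hrint⟩
    have hnotW : p[i+1] ∉ {v | v ≠ s ∧ v ∈ MarkovBlanket G y ∧
        (Ancestor G v s ∨ Ancestor G v y)} :=
      hnc p[i+1] (noncollider_of_index hnd h hCL)
    apply hnotW
    refine ⟨hvnes, hmb, ?_⟩
    by_cases harr : ArrowInto G p[i+2] p[i+1]
    · have hdir : G.dir p[i+1] p[i] :=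
        dir_of_adj_not_arrow (chain'_getElem hch i (by omega)) (fun ha => hCL ⟨ha, harr⟩)
      rcases hdesc i (by omega) hdir with h' | h'
      · exact Or.inl (anc_trans (anc_of_dir hdir) h')
      · exact Or.inr (anc_trans (anc_of_dir hdir) h')
    · have hadj : G.adj p[i+1] p[i+2] := chain'_getElem hch (i+1) (by omega)
      have hdir : G.dir p[i+1] p[i+2] := dir_of_adj_not_arrow (adj_symm hadj) harr
      by_cases hend : i + 3 = p.length
      · have he : p[i+2] = y := by
          rw [getElem_idx_congr (show i+2 = p.length - 1 by omega) (by omega), hpb]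
        rw [he] at hdir
        exact Or.inr (anc_of_dir hdir)
      · obtain ⟨hn1, hn2⟩ := hsuf (i+1) (by omega) (by omega)
        rcases hcolI (i+1) (by omega) hn1 hn2 with h' | h'
        · exact Or.inl (anc_trans (anc_of_dir hdir) h')
        · exact Or.inr (anc_trans (anc_of_dir hdir) h')
  -- downward induction
  have hALL : ∀ (i : ℕ) (h : i+2 < p.length),
      ArrowInto G p[i] p[i+1] ∧ ArrowInto G p[i+2] p[i+1] := by
    have hAC : ∀ (k i : ℕ) (h : i+2 < p.length), p.length - i ≤ k →
        ArrowInto G p[i] p[i+1] ∧ ArrowInto G p[i+2] p[i+1] := by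
      intro k
      induction k with
      | zero => intro i h hk; omega
      | succ k ih =>
        intro i h hk
        exact hstep i h (fun i' hii' h' => ih i' h' (by omega))
    exact fun i h => hAC p.length i h (by omega)
  -- the path is an inducing path : contradiction with maximality
  obtain ⟨Z', hsZ', hyZ', hsep⟩ := hmag.2.2 s y hsy hnadj
  have hconn : MConn G Z' s y := by
    refine inducing_aux hsZ' hyZ' hsy p.length p hch hh hl hlen ?_ ?_
    · intro i hi
      obtain ⟨a1, a2⟩ := hALL i hi
      refine Or.inl ⟨a1, a2, ?_⟩
      rcases hcolI i hi a1 a2 with h' | h'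
      · exact Or.inl h'
      · exact Or.inr (Or.inl h')
    · intro i hi _
      omega
  obtain ⟨q, hq⟩ := hconn
  exact hsep q hq


set_option maxHeartbeats 1600000 in
/-- Necessity of rule R1 (Scenario 1 in the proof of Theorem 4). -/
theorem rule_R1_necessary
    {V : Type*} [Fintype V] (G : MixedGraph V) (x y : V) (O : Set V)
    (h : Pretreatment G x y O)
    (hvis : VisibleEdge G x y)
    (hadj : ∃ Z ⊆ O, ValidAdjustment G x y Z) :
    ∃ S ∈ MarkovBlanket G x \ {y}, ∃ Z ⊆ MarkovBlanket G y \ {x},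
      MConn G Z S y ∧ MSep G (Z ∪ {x}) S y := by
  obtain ⟨hxy, s, hsy, hnadj, hcase⟩ := hvis
  have hmag := h.mag
  have hxny : x ≠ y := h.ne
  have hsx : s ≠ x := by
    rcases hcase with harr | ⟨q, ⟨⟨hch, hnd, hh, hl, hlen⟩, _⟩, _, _⟩
    · exact ne_of_arrow harr
    · intro he
      have hq0 : q[0]'(by omega) = s := by
        have := head?_eq_getElem (p := q) (by omega); rw [hh] at this
        exact (Option.some_inj.mp this).symm
      have hqL : q[q.length-1]'(by omega) = x := by
        have := getLast?_eq_getElem (p := q) (by omega); rw [hl] at this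
        exact (Option.some_inj.mp this).symm
      have heq : q[0]'(by omega) = q[q.length-1]'(by omega) := by rw [hq0, hqL, he]
      have := nodup_getElem_inj hnd (by omega) (by omega) heq
      omega
  set W := {v | v ≠ s ∧ v ∈ MarkovBlanket G y ∧ (Ancestor G v s ∨ Ancestor G v y)} with hW
  have hxW : x ∈ W := ⟨fun he => hsx he.symm, ⟨hxny, Or.inl (Or.inl hxy)⟩,
    Or.inr (anc_of_dir hxy)⟩
  have hsW : s ∉ W := fun hmem => hmem.1 rfl
  have hyW : y ∉ W := fun hmem => hmem.2.1.1 rfl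
  have hxZ : x ∉ W \ {x} := fun hmem => hmem.2 rfl
  have hsZ : s ∉ W \ {x} := fun hmem => hsW hmem.1
  have hyZ : y ∉ W \ {x} := fun hmem => hyW hmem.1
  refine ⟨s, ⟨?_, fun he => hsy he⟩, W \ {x}, ?_, ?_, ?_⟩
  · -- s ∈ MarkovBlanket G x
    refine ⟨hsx, ?_⟩
    rcases hcase with harr | ⟨q, hcp, _, _⟩
    · exact Or.inl (adj_of_arrow harr)
    · by_cases hadjsx : G.adj s x
      · exact Or.inl hadjsx
      · exact Or.inr ⟨hadjsx, q, hcp⟩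
  · -- W \ {x} ⊆ MarkovBlanket G y \ {x}
    intro v hv
    exact ⟨hv.1.2.1, hv.2⟩
  · -- MConn G (W \ {x}) s y
    rcases hcase with harr | ⟨q, ⟨⟨hch, hnd, hh, hl, hlen⟩, hint⟩, _, hpar⟩
    · -- scenario 1 : path [s, x, y]
      refine ⟨[s, x, y], mconnPath_of_nodup_okw ?_ ?_ rfl ?_ (by simp) ?_ hsZ hyZ⟩
      · apply chain'_of_getElem
        intro t ht
        have ht' : t + 1 < 3 := by simpa using ht
        rcases t with - | - | n
        · simpa using adj_of_arrow harr
        · show G.adj x y; exact Or.inl hxy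
        · omega
      · simp [hsx, hsy, hxny]
      · rfl
      · intro i hi
        have hi' : i + 2 < 3 := by simpa using hi
        obtain rfl : i = 0 := by omega
        constructor
        · rintro ⟨-, a2⟩
          exfalso
          simp only [List.getElem_cons_succ, List.getElem_cons_zero] at a2
          exact not_arrowInto_of_dir hxy a2
        · intro _
          simp only [List.getElem_cons_succ, List.getElem_cons_zero]
          exact hxZ
    · -- scenario 2 : path q ++ [y]
      have hp0 : q[0]'(by omega) = s := by
        have := head?_eq_getElem (p := q) (by omega); rw [hh] at this
        exact (Option.some_inj.mp this).symm
      have hpx : q[q.length-1]'(by omega) = x := by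
        have := getLast?_eq_getElem (p := q) (by omega); rw [hl] at this
        exact (Option.some_inj.mp this).symm
      have hynotq : y ∉ q := by
        intro hmem
        obtain ⟨k, hk, hky⟩ := List.mem_iff_getElem.mp hmem
        rcases Nat.eq_zero_or_pos k with rfl | hk0
        · rw [hp0] at hky; exact hsy hky
        rcases Nat.lt_or_ge k (q.length - 1) with hklt | hkge
        · have hik : IsIntermediateOn q y :=
            intermediate_iff.mpr ⟨k-1, by omega,
              by rw [getElem_idx_congr (show k-1+1 = k by omega) (by omega)]; exact hky⟩
          exact G.dir_irrefl y (hpar y hik)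
        · have hkeq : k = q.length - 1 := by omega
          rw [getElem_idx_congr hkeq (by omega), hpx] at hky
          exact hxny hky
      set q2 := q ++ [y] with hq2
      have hq2len : q2.length = q.length + 1 := by rw [hq2, List.length_append]; simp
      have hgl : ∀ (t : ℕ) (ht : t < q.length) (h : t < q2.length), q2[t] = q[t] :=
        fun t ht h2 => app_getElem_left' hq2 t ht h2
      refine ⟨q2, mconnPath_of_nodup_okw ?_ ?_ ?_ ?_ (by omega) ?_ hsZ hyZ⟩
      · rw [hq2]; show List.IsChain _ _; rw [List.isChain_append]
        refine ⟨hch, by simp, ?_⟩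
        intro u hu v hv
        rw [hl] at hu
        simp only [Option.mem_def, Option.some_inj] at hu
        simp only [List.head?_cons, Option.mem_def, Option.some_inj] at hv
        subst hu; subst hv
        exact Or.inl hxy
      · rw [hq2, List.nodup_append]
        exact ⟨hnd, by simp, fun a ha b hb => by
          simp only [List.mem_singleton] at hb
          subst hb
          exact fun hab => hynotq (hab ▸ ha)⟩
      · rw [head?_eq_getElem (by omega), hgl 0 (by omega) (by omega), hp0]
      · rw [hq2]
        exact List.getLast?_concat
      · intro i hi
        rcases Nat.lt_or_ge (i+2) q.length with hc | hc
        · -- window fully inside q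
          have e0 := hgl i (by omega) (by omega)
          have e1 := hgl (i+1) (by omega) (by omega)
          have e2 := hgl (i+2) (by omega) (by omega)
          rw [e0, e1, e2]
          have hintm : IsColliderOn G q q[i+1] :=
            hint q[i+1] (intermediate_iff.mpr ⟨i, by omega, rfl⟩)
          obtain ⟨a1, a2⟩ := collider_at_index hnd (by omega) hintm
          have hdiry : G.dir q[i+1] y :=
            hpar q[i+1] (intermediate_iff.mpr ⟨i, by omega, rfl⟩)
          constructor
          · rintro ⟨-, -⟩
            refine ⟨q[i+1], ⟨⟨?_, ⟨?_, Or.inl (Or.inl hdiry)⟩,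
              Or.inr (anc_of_dir hdiry)⟩, ?_⟩, anc_refl G _⟩
            · intro he
              have heq : q[i+1] = q[0]'(by omega) := by rw [he, hp0]
              have := nodup_getElem_inj hnd (by omega) (by omega) heq
              omega
            · intro he
              exact G.dir_irrefl y (by rw [he] at hdiry; exact hdiry)
            · intro he
              simp only [Set.mem_singleton_iff] at he
              have heq : q[i+1] = q[q.length-1]'(by omega) := by rw [he, hpx]
              have := nodup_getElem_inj hnd (by omega) (by omega) heq
              omega
          · intro hnb
            exact absurd ⟨a1, a2⟩ hnb
        · -- last window : (·, x, y)
          have hieq : i + 2 = q.length := by rw [hq2len] at hi; omega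
          have e1 := hgl (i+1) (by omega) (by omega)
          have e2 : q2[i+2]'(by omega) = y := by
            rw [getElem_idx_congr (show i+2 = q.length by omega) (by omega)]
            exact app_getElem_last' hq2 (by omega)
          have e1x : q2[i+1]'(by omega) = x := by
            rw [e1, getElem_idx_congr (show i+1 = q.length - 1 by omega) (by omega), hpx]
          rw [e1x, e2]
          constructor
          · rintro ⟨-, a2⟩
            exact absurd a2 (not_arrowInto_of_dir hxy)
          · intro _
            exact hxZ
  · -- MSep G ((W \ {x}) ∪ {x}) s y
    have hZx : (W \ {x}) ∪ {x} = W := by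
      ext v
      simp only [Set.mem_union, Set.mem_diff, Set.mem_singleton_iff]
      constructor
      · rintro (⟨hvW, -⟩ | rfl)
        · exact hvW
        · exact hxW
      · intro hvW
        by_cases hvx : v = x
        · exact Or.inr hvx
        · exact Or.inl ⟨hvW, hvx⟩
    rw [hZx]
    exact msep_W hmag hsy hnadj

end CausalGraph
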